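/- arXiv:2504.17193 — 3 statements merged into one kernel-verified Lean document; each statement's English description precedes it below -/
import Mathlib

section
/- Let X be a real Hilbert space, Y a real Banach space, and F : X → Y Fréchet differentiable with L-Lipschitz continuous derivative F′ : X → B(X,Y) (i.e., ‖F′(x) − F′(y)‖ ≤ L‖x − y‖ in the operator norm), for some L > 0. Then for any finitely many points x₁,…,xₙ ∈ X and nonnegative weights λ₁,…,λₙ with ∑ᵢ λᵢ = 1, one has ‖F(∑ᵢ λᵢ xᵢ) − ∑ᵢ λᵢ F(xᵢ)‖ ≤ (L/2) · ∑_{1 ≤ i < j ≤ n} λᵢ λⱼ ‖xᵢ − xⱼ‖². -/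
/-!
Let `z = ∑ λᵢ xᵢ`. Since `∑ λᵢ (xᵢ - z) = 0`, the linear term `F'(z)` drops out of
`∑ λᵢ (F xᵢ - F z - F'(z)(xᵢ - z)) = ∑ λᵢ F xᵢ - F z`, and each remainder is at most
`L/2 ‖xᵢ - z‖²` by the first-order Taylor estimate for a Lipschitz derivative. In a Hilbert
space the weighted variance `∑ λᵢ ‖xᵢ - z‖²` equals `∑_{i<j} λᵢ λⱼ ‖xᵢ - xⱼ‖²` (Huygens).
-/

open Finset

theorem norm_sub_sub_fderiv_le_of_lipschitz_fderiv
    {E F : Type*} [NormedAddCommGroup E] [NormedSpace ℝ E]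
    [NormedAddCommGroup F] [NormedSpace ℝ F]
    {f : E → F} {L : ℝ} (hf : Differentiable ℝ f) {a : E}
    (hlip : ∀ y, ‖fderiv ℝ f y - fderiv ℝ f a‖ ≤ L * ‖y - a‖) (b : E) :
    ‖f b - f a - fderiv ℝ f a (b - a)‖ ≤ L / 2 * ‖b - a‖ ^ 2 := by
  set v := b - a
  set g : ℝ → F := fun t ↦ f (a + t • v) - f a - t • fderiv ℝ f a v
  have hg : ∀ t, HasDerivAt g (fderiv ℝ f (a + t • v) v - fderiv ℝ f a v) t := by
    intro t
    have hline : HasDerivAt (fun t : ℝ ↦ a + t • v) v t := by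
      simpa using ((hasDerivAt_id t).smul_const v).const_add a
    exact (((hf _).hasFDerivAt.comp_hasDerivAt t hline).sub_const (f a)).sub
      (by simpa using (hasDerivAt_id t).smul_const (fderiv ℝ f a v))
  have hB : ∀ t, HasDerivAt (fun t ↦ L / 2 * ‖v‖ ^ 2 * t ^ 2) (L * ‖v‖ ^ 2 * t) t := fun t ↦
    ((hasDerivAt_pow 2 t).const_mul (L / 2 * ‖v‖ ^ 2)).congr_deriv (by push_cast; ring)
  have hbound : ∀ t ∈ Set.Ico (0 : ℝ) 1,
      ‖fderiv ℝ f (a + t • v) v - fderiv ℝ f a v‖ ≤ L * ‖v‖ ^ 2 * t := by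
    rintro t ⟨ht, -⟩
    calc ‖fderiv ℝ f (a + t • v) v - fderiv ℝ f a v‖
        ≤ ‖fderiv ℝ f (a + t • v) - fderiv ℝ f a‖ * ‖v‖ :=
          (fderiv ℝ f (a + t • v) - fderiv ℝ f a).le_opNorm v
      _ ≤ L * ‖t • v‖ * ‖v‖ := by
          gcongr
          simpa using hlip (a + t • v)
      _ = L * ‖v‖ ^ 2 * t := by
          rw [norm_smul, Real.norm_of_nonneg ht]; ring
  have key := image_norm_le_of_norm_deriv_right_le_deriv_boundary
    (fun t _ ↦ (hg t).continuousAt.continuousWithinAt) (fun t _ ↦ (hg t).hasDerivWithinAt)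
    (by simp [g]) hB hbound (Set.right_mem_Icc.2 zero_le_one)
  simpa [g, v] using key

theorem Finset.two_mul_sum_sum_ite_lt {ι : Type*} [Fintype ι] [LinearOrder ι]
    (f : ι → ι → ℝ) (hdiag : ∀ i, f i i = 0) (hsymm : ∀ i j, f i j = f j i) :
    2 * ∑ i, ∑ j, (if i < j then f i j else 0) = ∑ i, ∑ j, f i j := by
  have hswap : ∑ i, ∑ j, (if i < j then f i j else 0) =
      ∑ i, ∑ j, if j < i then f i j else 0 := by
    rw [sum_comm]
    simp only [hsymm]
  rw [two_mul]
  nth_rewrite 2 [hswap]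
  rw [← sum_add_distrib]
  refine sum_congr rfl fun i _ ↦ ?_
  rw [← sum_add_distrib]
  refine sum_congr rfl fun j _ ↦ ?_
  rcases lt_trichotomy i j with h | rfl | h
  · simp [h, h.not_gt]
  · simp [hdiag]
  · simp [h, h.not_gt]

section Centroid

variable {ι : Type*} [Fintype ι] {w : ι → ℝ}

theorem sum_smul_sub_centroid {E : Type*} [AddCommGroup E] [Module ℝ E]
    (hw : ∑ i, w i = 1) (x : ι → E) : ∑ i, w i • (x i - ∑ j, w j • x j) = 0 := by
  simp only [smul_sub, sum_sub_distrib, ← sum_smul, hw, one_smul, sub_self]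

variable {E : Type*} [NormedAddCommGroup E] [InnerProductSpace ℝ E]

theorem sum_mul_norm_sub_sq_eq_add (hw : ∑ i, w i = 1) (x : ι → E) (y : E) :
    ∑ i, w i * ‖x i - y‖ ^ 2 =
      ∑ i, w i * ‖x i - ∑ j, w j • x j‖ ^ 2 + ‖∑ j, w j • x j - y‖ ^ 2 := by
  set z := ∑ j, w j • x j
  have hsplit : ∀ i, w i * ‖x i - y‖ ^ 2 = w i * ‖x i - z‖ ^ 2
      + 2 * inner ℝ (w i • (x i - z)) (z - y) + w i * ‖z - y‖ ^ 2 := by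
    intro i
    rw [← sub_add_sub_cancel (x i) z y, norm_add_sq_real, real_inner_smul_left]
    ring
  have hz : ∑ i, w i • (x i - z) = 0 := sum_smul_sub_centroid hw x
  simp only [hsplit, sum_add_distrib, ← mul_sum, ← sum_inner, ← sum_mul, hw, hz,
    inner_zero_left, mul_zero, add_zero, one_mul]

theorem sum_sum_mul_norm_sub_sq (hw : ∑ i, w i = 1) (x : ι → E) :
    ∑ i, ∑ j, w i * w j * ‖x i - x j‖ ^ 2 = 2 * ∑ i, w i * ‖x i - ∑ j, w j • x j‖ ^ 2 := by
  set V := ∑ i, w i * ‖x i - ∑ j, w j • x j‖ ^ 2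
  calc ∑ i, ∑ j, w i * w j * ‖x i - x j‖ ^ 2
      = ∑ i, w i * ∑ j, w j * ‖x j - x i‖ ^ 2 := by
        simp only [mul_sum, mul_assoc, norm_sub_rev (x _) (x _)]
    _ = ∑ i, w i * (V + ‖x i - ∑ k, w k • x k‖ ^ 2) := by
        refine sum_congr rfl fun i _ ↦ ?_
        rw [sum_mul_norm_sub_sq_eq_add hw, norm_sub_rev]
    _ = 2 * V := by
        simp only [mul_add, sum_add_distrib, ← sum_mul, hw, one_mul]
        ring

theorem sum_mul_norm_sub_centroid_sq [LinearOrder ι] (hw : ∑ i, w i = 1) (x : ι → E) :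
    ∑ i, w i * ‖x i - ∑ j, w j • x j‖ ^ 2 =
      ∑ i, ∑ j, if i < j then w i * w j * ‖x i - x j‖ ^ 2 else 0 := by
  have h := two_mul_sum_sum_ite_lt (fun i j ↦ w i * w j * ‖x i - x j‖ ^ 2)
    (by simp) (fun i j ↦ by rw [mul_comm (w i), norm_sub_rev])
  rw [sum_sum_mul_norm_sub_sq hw] at h
  linarith

end Centroid

theorem jensen_inequality_of_lipschitz_derivative_general
    {X : Type*} [NormedAddCommGroup X] [InnerProductSpace ℝ X]
    {Y : Type*} [NormedAddCommGroup Y] [NormedSpace ℝ Y]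
    (F : X → Y) (L : ℝ)
    (hF : Differentiable ℝ F)
    (hlip : ∀ x y : X, ‖fderiv ℝ F x - fderiv ℝ F y‖ ≤ L * ‖x - y‖)
    (n : ℕ) (x : Fin n → X) (lam : Fin n → ℝ)
    (hlam : ∀ i, 0 ≤ lam i) (hsum : ∑ i, lam i = 1) :
    ‖F (∑ i, lam i • x i) - ∑ i, lam i • F (x i)‖ ≤
      L / 2 * ∑ i, ∑ j, if i < j then lam i * lam j * ‖x i - x j‖ ^ 2 else 0 := by
  set z := ∑ i, lam i • x i
  have hlinear : ∑ i, lam i • fderiv ℝ F z (x i - z) = 0 := by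
    simp only [← map_smul, ← map_sum, sum_smul_sub_centroid hsum x, map_zero, z]
  have hremainder : ∑ i, lam i • F (x i) - F z =
      ∑ i, lam i • (F (x i) - F z - fderiv ℝ F z (x i - z)) := by
    simp only [smul_sub, sum_sub_distrib, ← sum_smul, hsum, one_smul, hlinear, sub_zero]
  calc ‖F z - ∑ i, lam i • F (x i)‖
      = ‖∑ i, lam i • (F (x i) - F z - fderiv ℝ F z (x i - z))‖ := by
        rw [norm_sub_rev, hremainder]
    _ ≤ ∑ i, lam i * (L / 2 * ‖x i - z‖ ^ 2) := by
        refine (norm_sum_le _ _).trans (sum_le_sum fun i _ ↦ ?_)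
        rw [norm_smul_of_nonneg (hlam i)]
        gcongr
        · exact hlam i
        · exact norm_sub_sub_fderiv_le_of_lipschitz_fderiv hF (hlip · z) (x i)
    _ = L / 2 * ∑ i, ∑ j, if i < j then lam i * lam j * ‖x i - x j‖ ^ 2 else 0 := by
        rw [← sum_mul_norm_sub_centroid_sq hsum x, mul_sum]
        exact sum_congr rfl fun i _ ↦ by ring

/-- If `F : X → Y` (with `X` a real Hilbert space and `Y` a real Banach space) is Fréchet
differentiable with `L`-Lipschitz derivative, then `F` satisfies the Jensen-type inequality
for all convex combinations. -/
theorem jensen_inequality_of_lipschitz_derivative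
    {X : Type*} [NormedAddCommGroup X] [InnerProductSpace ℝ X] [CompleteSpace X]
    {Y : Type*} [NormedAddCommGroup Y] [NormedSpace ℝ Y] [CompleteSpace Y]
    (F : X → Y) (L : ℝ) (hL : 0 < L)
    (hF : Differentiable ℝ F)
    (hlip : ∀ x y : X, ‖fderiv ℝ F x - fderiv ℝ F y‖ ≤ L * ‖x - y‖)
    (n : ℕ) (x : Fin n → X) (lam : Fin n → ℝ)
    (hlam : ∀ i, 0 ≤ lam i) (hsum : ∑ i, lam i = 1) :
    ‖F (∑ i, lam i • x i) - ∑ i, lam i • F (x i)‖ ≤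
      L / 2 * ∑ i, ∑ j, if i < j then lam i * lam j * ‖x i - x j‖ ^ 2 else 0 :=
  jensen_inequality_of_lipschitz_derivative_general F L hF hlip n x lam hlam hsum
end

section
/- Let X be a real Hilbert space, Y a real Banach space, F : X → Y continuous, and L > 0. Suppose that for any finitely many points x₁,…,xₙ ∈ X and nonnegative weights λ₁,…,λₙ with ∑ᵢ λᵢ = 1, one has ‖F(∑ᵢ λᵢ xᵢ) − ∑ᵢ λᵢ F(xᵢ)‖ ≤ (L/2) · ∑_{1 ≤ i < j ≤ n} λᵢ λⱼ ‖xᵢ − xⱼ‖². Then for every continuous linear functional y* ∈ Y* with ‖y*‖ ≤ 1, the slice φ_{y*} : X → ℝ defined by φ_{y*}(x) = y*(F(x)) is Fréchet differentiable on X and its gradient ∇φ_{y*} : X → X is L-Lipschitz continuous. -/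
/-!
The two-point case of the hypothesis says that `φ + (L/2)‖·‖²` is convex and `φ - (L/2)‖·‖²` is
concave, and a slice `y* ∘ F` with `‖y*‖ ≤ 1` inherits it. On a line `t ↦ φ (x + t • v)` this makes
the difference quotients at `0` Lipschitz in `t`, so they converge, with
`|φ (x + t • v) - φ x - t ∂ᵥφ(x)| ≤ (L/2) ‖v‖² t²`. The midpoint case makes `v ↦ ∂ᵥφ(x)` additive,
continuity of `φ` makes it continuous, so it is the Fréchet derivative and
`|φ y - φ x - ⟪∇φ x, y - x⟫| ≤ (L/2) ‖y - x‖²`. For `ψ = φ + (L/2)‖·‖²` this says that `ψ` is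
convex and `2L`-smooth, so `∇ψ` is cocoercive (Baillon–Haddad):
`‖∇ψ x - ∇ψ y‖² ≤ 2L ⟪∇ψ x - ∇ψ y, x - y⟫`. Substituting `∇ψ = ∇φ + L • id`, this is exactly
`‖∇φ x - ∇φ y‖ ≤ L ‖x - y‖`.
-/

open Filter Set Asymptotics
open scoped RealInnerProductSpace

lemma hasFDerivAt_of_norm_sub_sub_le_sq {E F : Type*} [NormedAddCommGroup E] [NormedSpace ℝ E]
    [NormedAddCommGroup F] [NormedSpace ℝ F] {f : E → F} {f' : E →L[ℝ] F} {x : E} {K : ℝ}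
    (hf : ∀ u, ‖f (x + u) - f x - f' u‖ ≤ K * ‖u‖ ^ 2) : HasFDerivAt f f' x := by
  rw [hasFDerivAt_iff_isLittleO_nhds_zero]
  refine (IsBigO.of_bound K (Eventually.of_forall fun u => ?_)).trans_isLittleO
    (isLittleO_norm_pow_id one_lt_two)
  simpa using hf u

lemma hasLineDerivAt_of_abs_sub_sub_le_sq {E : Type*} [NormedAddCommGroup E] [NormedSpace ℝ E]
    {f : E → ℝ} {x v : E} {A K : ℝ} (hf : ∀ t : ℝ, |f (x + t • v) - f x - t * A| ≤ K * t ^ 2) :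
    HasLineDerivAt ℝ f A x v := by
  rw [HasLineDerivAt, hasDerivAt_iff_hasFDerivAt]
  refine hasFDerivAt_of_norm_sub_sub_le_sq (K := K) fun t => ?_
  simpa [Real.norm_eq_abs, mul_comm t] using hf t

section Cocoercive

variable {X : Type*} [NormedAddCommGroup X] [InnerProductSpace ℝ X] {f : X → ℝ} {G : X → X}
  {M : ℝ}

lemma add_inner_add_norm_sq_le (hM : 0 < M) (hlow : ∀ x y, f x + ⟪G x, y - x⟫ ≤ f y)
    (hup : ∀ x y, f y ≤ f x + ⟪G x, y - x⟫ + M / 2 * ‖y - x‖ ^ 2) (x y : X) :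
    f x + ⟪G x, y - x⟫ + (2 * M)⁻¹ * ‖G y - G x‖ ^ 2 ≤ f y := by
  set w := G y - G x
  -- a gradient step from `y` for `f - ⟪G x, ·⟫`, whose minimum is attained at `x`
  set z := y - M⁻¹ • w
  have h₁ := hlow x z
  have h₂ := hup y z
  have hzx : ⟪G x, z - x⟫ = ⟪G x, y - x⟫ - M⁻¹ * ⟪G x, w⟫ := by
    rw [show z - x = (y - x) - M⁻¹ • w by module, inner_sub_right, real_inner_smul_right]
  have hzy : z - y = -(M⁻¹ • w) := by module
  rw [hzx] at h₁
  rw [hzy, inner_neg_right, real_inner_smul_right, norm_neg, norm_smul, Real.norm_eq_abs,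
    abs_of_pos (inv_pos.mpr hM), mul_pow] at h₂
  have hw : M⁻¹ * ⟪G y, w⟫ - M⁻¹ * ⟪G x, w⟫ = M⁻¹ * ‖w‖ ^ 2 := by
    rw [← mul_sub, ← inner_sub_left, real_inner_self_eq_norm_sq]
  have hM₁ : M / 2 * (M⁻¹ ^ 2 * ‖w‖ ^ 2) = (2 * M)⁻¹ * ‖w‖ ^ 2 := by field_simp
  have hM₂ : M⁻¹ * ‖w‖ ^ 2 - (2 * M)⁻¹ * ‖w‖ ^ 2 = (2 * M)⁻¹ * ‖w‖ ^ 2 := by field_simp; ring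
  linarith

lemma norm_sub_sq_le_mul_inner (hM : 0 < M) (hlow : ∀ x y, f x + ⟪G x, y - x⟫ ≤ f y)
    (hup : ∀ x y, f y ≤ f x + ⟪G x, y - x⟫ + M / 2 * ‖y - x‖ ^ 2) (x y : X) :
    ‖G x - G y‖ ^ 2 ≤ M * ⟪G x - G y, x - y⟫ := by
  have hxy := add_inner_add_norm_sq_le hM hlow hup x y
  have hyx := add_inner_add_norm_sq_le hM hlow hup y x
  rw [norm_sub_rev] at hxy
  have hinner : ⟪G x - G y, x - y⟫ = -⟪G x, y - x⟫ - ⟪G y, x - y⟫ := by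
    rw [inner_sub_left, ← inner_neg_right, neg_sub]
  have hM₂ : M⁻¹ * ‖G x - G y‖ ^ 2 = 2 * ((2 * M)⁻¹ * ‖G x - G y‖ ^ 2) := by field_simp
  rw [← inv_mul_le_iff₀ hM]
  linarith

lemma norm_sub_le_of_abs_sub_sub_inner_le {φ : X → ℝ} {g : X → X} {L : ℝ} (hL : 0 < L)
    (hφ : ∀ x y, |φ y - φ x - ⟪g x, y - x⟫| ≤ L / 2 * ‖y - x‖ ^ 2) (a b : X) :
    ‖g a - g b‖ ≤ L * ‖a - b‖ := by
  have hsq : ∀ x y : X,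
      L / 2 * ‖y‖ ^ 2 = L / 2 * ‖x‖ ^ 2 + L * ⟪x, y - x⟫ + L / 2 * ‖y - x‖ ^ 2 := fun x y => by
    have := norm_add_sq_real x (y - x)
    rw [add_sub_cancel] at this
    rw [this]
    ring
  have hinner : ∀ x y : X, ⟪g x + L • x, y - x⟫ = ⟪g x, y - x⟫ + L * ⟪x, y - x⟫ := fun x y => by
    rw [inner_add_left, real_inner_smul_left]
  have hco := norm_sub_sq_le_mul_inner (f := fun x => φ x + L / 2 * ‖x‖ ^ 2)
    (G := fun x => g x + L • x) (M := 2 * L) (by positivity)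
    (fun x y => by
      rw [hinner, hsq x y]
      linarith [(abs_le.mp (hφ x y)).1])
    (fun x y => by
      rw [hinner, hsq x y]
      linarith [(abs_le.mp (hφ x y)).2]) a b
  have hdiff : (g a + L • a) - (g b + L • b) = (g a - g b) + L • (a - b) := by module
  simp only [hdiff, norm_add_sq_real, inner_add_left, real_inner_smul_left, real_inner_smul_right,
    norm_smul, Real.norm_eq_abs, abs_of_pos hL, mul_pow, real_inner_self_eq_norm_sq] at hco
  rw [← sq_le_sq₀ (norm_nonneg _) (by positivity), mul_pow]
  linarith

end Cocoercive

def JensenGapBound {X Y : Type*} [NormedAddCommGroup X] [NormedSpace ℝ X]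
    [NormedAddCommGroup Y] [NormedSpace ℝ Y] (L : ℝ) (F : X → Y) : Prop :=
  ∀ x y : X, ∀ a b : ℝ, 0 ≤ a → 0 ≤ b → a + b = 1 →
    ‖F (a • x + b • y) - (a • F x + b • F y)‖ ≤ L / 2 * (a * b * ‖x - y‖ ^ 2)

namespace JensenGapBound

section NormedSpace

variable {X Y : Type*} [NormedAddCommGroup X] [NormedSpace ℝ X]
  [NormedAddCommGroup Y] [NormedSpace ℝ Y] {L : ℝ} {F : X → Y}

lemma of_fin_sum_le
    (hineq : ∀ (n : ℕ) (x : Fin n → X) (lam : Fin n → ℝ), (∀ i, 0 ≤ lam i) → ∑ i, lam i = 1 →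
      ‖F (∑ i, lam i • x i) - ∑ i, lam i • F (x i)‖ ≤
        L / 2 * ∑ i, ∑ j, if i < j then lam i * lam j * ‖x i - x j‖ ^ 2 else 0) :
    JensenGapBound L F := by
  intro x y a b ha hb hab
  simpa [Fin.sum_univ_two] using
    hineq 2 ![x, y] ![a, b] (Fin.forall_fin_two.mpr ⟨ha, hb⟩) (by simpa [Fin.sum_univ_two])

lemma continuousLinearMap_comp (hF : JensenGapBound L F) {y' : Y →L[ℝ] ℝ} (hy' : ‖y'‖ ≤ 1) :
    JensenGapBound L (fun x => y' (F x)) := by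
  intro x y a b ha hb hab
  have hgap := hF x y a b ha hb hab
  calc ‖y' (F (a • x + b • y)) - (a • y' (F x) + b • y' (F y))‖
      = ‖y' (F (a • x + b • y) - (a • F x + b • F y))‖ := by
        simp only [map_sub, map_add, map_smul]
    _ ≤ ‖y'‖ * ‖F (a • x + b • y) - (a • F x + b • F y)‖ := y'.le_opNorm _
    _ ≤ 1 * (L / 2 * (a * b * ‖x - y‖ ^ 2)) := by gcongr
    _ = L / 2 * (a * b * ‖x - y‖ ^ 2) := one_mul _

lemma comp_line (hF : JensenGapBound L F) (x v : X) :
    JensenGapBound (L * ‖v‖ ^ 2) (fun t : ℝ => F (x + t • v)) := by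
  intro s t a b ha hb hab
  have hcomb : a • (x + s • v) + b • (x + t • v) = x + (a • s + b • t) • v := by
    obtain rfl : b = 1 - a := by linarith
    module
  have hdist : ‖(x + s • v) - (x + t • v)‖ = ‖s - t‖ * ‖v‖ := by
    rw [add_sub_add_left_eq_sub, ← sub_smul, norm_smul]
  have hgap := hF (x + s • v) (x + t • v) a b ha hb hab
  rw [hcomb, hdist] at hgap
  convert hgap using 1
  ring

lemma strongConvexOn {φ : X → ℝ} (hφ : JensenGapBound L φ) : StrongConvexOn univ (-L) φ := by
  refine ⟨convex_univ, fun x _ y _ a b ha hb hab => ?_⟩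
  have := (abs_le.mp (hφ x y a b ha hb hab)).2
  simp only [smul_eq_mul] at this ⊢
  linarith

lemma strongConcaveOn {φ : X → ℝ} (hφ : JensenGapBound L φ) : StrongConcaveOn univ (-L) φ := by
  refine ⟨convex_univ, fun x _ y _ a b ha hb hab => ?_⟩
  have := (abs_le.mp (hφ x y a b ha hb hab)).1
  simp only [smul_eq_mul] at this ⊢
  linarith

end NormedSpace

section Real

variable {C : ℝ} {ψ : ℝ → ℝ}

lemma abs_secant_sub_secant_le (hψ : JensenGapBound C ψ) {s t : ℝ} (hs : s ≠ 0) (ht : t ≠ 0) :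
    |(ψ t - ψ 0) / t - (ψ s - ψ 0) / s| ≤ C / 2 * |t - s| := by
  have hvex := strongConvexOn_iff_convex.mp hψ.strongConvexOn
  have hcave := strongConcaveOn_iff_convex.mp hψ.strongConcaveOn
  simp only [Real.norm_eq_abs, sq_abs] at hvex hcave
  wlog hst : s ≤ t generalizing s t
  · rw [abs_sub_comm, abs_sub_comm t]
    exact this ht hs (le_of_not_ge hst)
  have h₁ := hvex.secant_mono (mem_univ 0) (mem_univ s) (mem_univ t) hs ht hst
  have h₂ := hcave.neg.secant_mono (mem_univ 0) (mem_univ s) (mem_univ t) hs ht hst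
  simp only [Pi.neg_apply, sub_zero] at h₁ h₂
  have e₁ : ∀ r, r ≠ 0 →
      (ψ r - -C / 2 * r ^ 2 - (ψ 0 - -C / 2 * 0 ^ 2)) / r = (ψ r - ψ 0) / r + C / 2 * r := by
    intro r hr; field_simp; ring
  have e₂ : ∀ r, r ≠ 0 →
      (-(ψ r + -C / 2 * r ^ 2) - -(ψ 0 + -C / 2 * 0 ^ 2)) / r = -((ψ r - ψ 0) / r) + C / 2 * r := by
    intro r hr; field_simp; ring
  rw [e₁ s hs, e₁ t ht] at h₁
  rw [e₂ s hs, e₂ t ht] at h₂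
  rw [abs_sub_le_iff, abs_of_nonneg (sub_nonneg.mpr hst)]
  constructor <;> linarith

lemma exists_abs_sub_sub_mul_le (hψ : JensenGapBound C ψ) :
    ∃ A : ℝ, ∀ t : ℝ, |ψ t - ψ 0 - t * A| ≤ C / 2 * t ^ 2 := by
  have hC : 0 ≤ C / 2 := by
    have := (abs_nonneg _).trans (hψ.abs_secant_sub_secant_le one_ne_zero two_ne_zero)
    norm_num at this
    linarith
  have hlip : LipschitzOnWith (Real.toNNReal (C / 2)) (fun t => (ψ t - ψ 0) / t) {0}ᶜ :=
    LipschitzOnWith.of_dist_le' fun t ht s hs => by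
      simpa only [Real.dist_eq] using hψ.abs_secant_sub_secant_le hs ht
  -- the value at `0` of a Lipschitz extension of the secant slopes is the derivative
  obtain ⟨g, hg, hfg⟩ := hlip.extend_real
  refine ⟨g 0, fun t => ?_⟩
  rcases eq_or_ne t 0 with rfl | ht
  · simp
  have hgt := hg.dist_le_mul t 0
  rw [Real.coe_toNNReal _ hC, Real.dist_eq, Real.dist_eq, sub_zero, ← hfg ht] at hgt
  calc |ψ t - ψ 0 - t * g 0| = |t| * |(ψ t - ψ 0) / t - g 0| := by
        rw [← abs_mul, mul_sub, mul_div_cancel₀ _ ht]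
    _ ≤ |t| * (C / 2 * |t|) := by gcongr
    _ = C / 2 * t ^ 2 := by rw [← sq_abs t]; ring

end Real

section InnerProductSpace

variable {X : Type*} [NormedAddCommGroup X] [InnerProductSpace ℝ X] {L : ℝ} {φ : X → ℝ}

lemma abs_sub_sub_lineDeriv_le (hφ : JensenGapBound L φ) (x v : X) (t : ℝ) :
    |φ (x + t • v) - φ x - t * lineDeriv ℝ φ x v| ≤ L / 2 * ‖v‖ ^ 2 * t ^ 2 := by
  obtain ⟨A, hA⟩ := (hφ.comp_line x v).exists_abs_sub_sub_mul_le
  simp only [zero_smul, add_zero] at hA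
  rw [(hasLineDerivAt_of_abs_sub_sub_le_sq hA).lineDeriv]
  linarith [hA t]

lemma abs_add_sub_sub_lineDeriv_le (hφ : JensenGapBound L φ) (x u : X) :
    |φ (x + u) - φ x - lineDeriv ℝ φ x u| ≤ L / 2 * ‖u‖ ^ 2 := by
  simpa using hφ.abs_sub_sub_lineDeriv_le x u 1

lemma lineDeriv_add (hφ : JensenGapBound L φ) (x u v : X) :
    lineDeriv ℝ φ x (u + v) = lineDeriv ℝ φ x u + lineDeriv ℝ φ x v := by
  refine HasLineDerivAt.lineDeriv <| hasLineDerivAt_of_abs_sub_sub_le_sq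
    (K := L / 2 * ‖u - v‖ ^ 2 + L * ‖u‖ ^ 2 + L * ‖v‖ ^ 2) fun t => ?_
  have hmid : (1 / 2 : ℝ) • (x + (2 * t) • u) + (1 / 2 : ℝ) • (x + (2 * t) • v)
      = x + t • (u + v) := by module
  have hdist : ‖(x + (2 * t) • u) - (x + (2 * t) • v)‖ ^ 2 = 4 * t ^ 2 * ‖u - v‖ ^ 2 := by
    rw [add_sub_add_left_eq_sub, ← smul_sub, norm_smul, mul_pow, Real.norm_eq_abs, sq_abs]
    ring
  have hgap := hφ (x + (2 * t) • u) (x + (2 * t) • v) (1 / 2) (1 / 2) (by norm_num) (by norm_num)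
    (by norm_num)
  rw [hmid, hdist, Real.norm_eq_abs, smul_eq_mul, smul_eq_mul] at hgap
  have hu := abs_le.mp (hφ.abs_sub_sub_lineDeriv_le x u (2 * t))
  have hv := abs_le.mp (hφ.abs_sub_sub_lineDeriv_le x v (2 * t))
  have hg := abs_le.mp hgap
  rw [abs_le]
  constructor <;> linarith [hu.1, hu.2, hv.1, hv.2, hg.1, hg.2]

lemma continuous_lineDeriv (hφ : JensenGapBound L φ) (hc : Continuous φ) (x : X) :
    Continuous (lineDeriv ℝ φ x) := by
  refine continuous_of_tendsto_nhds_zero (AddMonoidHom.mk' _ (hφ.lineDeriv_add x)) ?_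
  have hbound : ∀ u, ‖lineDeriv ℝ φ x u‖ ≤ |φ (x + u) - φ x| + L / 2 * ‖u‖ ^ 2 := fun u => by
    have htri := abs_sub (φ (x + u) - φ x) (φ (x + u) - φ x - lineDeriv ℝ φ x u)
    rw [sub_sub_cancel] at htri
    rw [Real.norm_eq_abs]
    linarith [hφ.abs_add_sub_sub_lineDeriv_le x u]
  refine squeeze_zero_norm hbound ?_
  have : Continuous fun u => |φ (x + u) - φ x| + L / 2 * ‖u‖ ^ 2 := by fun_prop
  simpa using this.tendsto 0

lemma differentiable (hφ : JensenGapBound L φ) (hc : Continuous φ) : Differentiable ℝ φ :=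
  fun x => (hasFDerivAt_of_norm_sub_sub_le_sq
    (f' := (AddMonoidHom.mk' _ (hφ.lineDeriv_add x)).toRealLinearMap (hφ.continuous_lineDeriv hc x))
    (hφ.abs_add_sub_sub_lineDeriv_le x)).differentiableAt

lemma abs_sub_sub_fderiv_le (hφ : JensenGapBound L φ) (hc : Continuous φ) (x y : X) :
    |φ y - φ x - fderiv ℝ φ x (y - x)| ≤ L / 2 * ‖y - x‖ ^ 2 := by
  rw [← (hφ.differentiable hc x).lineDeriv_eq_fderiv]
  simpa using hφ.abs_add_sub_sub_lineDeriv_le x (y - x)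

lemma norm_gradient_sub_le [CompleteSpace X] (hφ : JensenGapBound L φ) (hc : Continuous φ)
    (hL : 0 < L) (a b : X) : ‖gradient φ a - gradient φ b‖ ≤ L * ‖a - b‖ :=
  norm_sub_le_of_abs_sub_sub_inner_le hL
    (fun x y => by simpa only [inner_gradient_left] using hφ.abs_sub_sub_fderiv_le hc x y) a b

end InnerProductSpace

end JensenGapBound

theorem slice_differentiable_of_jensen_inequality_general
    {X : Type*} [NormedAddCommGroup X] [InnerProductSpace ℝ X] [CompleteSpace X]
    {Y : Type*} [NormedAddCommGroup Y] [NormedSpace ℝ Y]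
    (F : X → Y) (hF : Continuous F) (L : ℝ) (hL : 0 < L)
    (hineq : ∀ (n : ℕ) (x : Fin n → X) (lam : Fin n → ℝ), (∀ i, 0 ≤ lam i) → ∑ i, lam i = 1 →
      ‖F (∑ i, lam i • x i) - ∑ i, lam i • F (x i)‖ ≤
        L / 2 * ∑ i, ∑ j, if i < j then lam i * lam j * ‖x i - x j‖ ^ 2 else 0) :
    ∀ y' : Y →L[ℝ] ℝ, ‖y'‖ ≤ 1 →
      Differentiable ℝ (fun z => y' (F z)) ∧
        ∀ a b : X, ‖gradient (fun z => y' (F z)) a - gradient (fun z => y' (F z)) b‖ ≤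
          L * ‖a - b‖ := by
  intro y' hy'
  have hslice := (JensenGapBound.of_fin_sum_le hineq).continuousLinearMap_comp hy'
  have hc : Continuous fun z => y' (F z) := y'.continuous.comp hF
  exact ⟨hslice.differentiable hc, hslice.norm_gradient_sub_le hc hL⟩

/-- If `F : X → Y` (with `X` a real Hilbert space and `Y` a real Banach space) is continuous
and satisfies the Jensen-type inequality, then for every `y* ∈ Y*` with `‖y*‖ ≤ 1`, the slice
`φ_{y*} = y* ∘ F` is Fréchet differentiable and its gradient is `L`-Lipschitz. -/
theorem slice_differentiable_of_jensen_inequality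
    {X : Type*} [NormedAddCommGroup X] [InnerProductSpace ℝ X] [CompleteSpace X]
    {Y : Type*} [NormedAddCommGroup Y] [NormedSpace ℝ Y] [CompleteSpace Y]
    (F : X → Y) (hF : Continuous F) (L : ℝ) (hL : 0 < L)
    (hineq : ∀ (n : ℕ) (x : Fin n → X) (lam : Fin n → ℝ), (∀ i, 0 ≤ lam i) → ∑ i, lam i = 1 →
      ‖F (∑ i, lam i • x i) - ∑ i, lam i • F (x i)‖ ≤
        L / 2 * ∑ i, ∑ j, if i < j then lam i * lam j * ‖x i - x j‖ ^ 2 else 0) :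
    ∀ y' : Y →L[ℝ] ℝ, ‖y'‖ ≤ 1 →
      Differentiable ℝ (fun z => y' (F z)) ∧
        ∀ a b : X, ‖gradient (fun z => y' (F z)) a - gradient (fun z => y' (F z)) b‖ ≤
          L * ‖a - b‖ :=
  slice_differentiable_of_jensen_inequality_general F hF L hL hineq
end

section
/- Let X be a real Hilbert space and Y a real Banach space that is reflexive (the canonical embedding of Y into its double dual Y** is surjective). Let F : X → Y be continuous and L > 0, and suppose that for any finitely many points x₁,…,xₙ ∈ X and nonnegative weights λ₁,…,λₙ with ∑ᵢ λᵢ = 1, one has ‖F(∑ᵢ λᵢ xᵢ) − ∑ᵢ λᵢ F(xᵢ)‖ ≤ (L/2) · ∑_{1 ≤ i < j ≤ n} λᵢ λⱼ ‖xᵢ − xⱼ‖². Then F is Fréchet differentiable on X and for all x, h ∈ X, ‖F(x + h) − F(x) − F′(x)h‖ ≤ (L/2)‖h‖². -/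
/-!
For two points the Jensen bound says that the difference quotients `t⁻¹ • (F (x + t • h) - F x)`
are `(L / 2) * ‖h‖ ^ 2`-Lipschitz in `t > 0`, so in the complete space `Y` they converge as
`t → 0⁺` to a directional derivative `A h`, and the Lipschitz estimate between `t = 1` and
`t → 0⁺` is exactly `‖F (x + h) - F x - A h‖ ≤ L / 2 * ‖h‖ ^ 2`. The midpoint case of the Jensen
bound makes `A` additive, and continuity of `F` makes it continuous, hence `ℝ`-linear; a remainder
of order `‖h‖ ^ 2` then makes `A` the Fréchet derivative.
-/

open Filter Topology Asymptotics

section QuadraticRemainder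

variable {X Y : Type*} [NormedAddCommGroup X] [NormedAddCommGroup Y] {F A : X → Y} {x : X} {C : ℝ}

theorem isLittleO_sub_sub_of_norm_le_sq (hA : ∀ h, ‖F (x + h) - F x - A h‖ ≤ C * ‖h‖ ^ 2) :
    (fun h => F (x + h) - F x - A h) =o[𝓝 0] fun h => h :=
  (IsBigO.of_bound C <| Eventually.of_forall fun h => by simpa using hA h).trans_isLittleO
    (isLittleO_norm_pow_id one_lt_two)

theorem tendsto_zero_of_norm_sub_le_sq (hF : ContinuousAt F x)
    (hA : ∀ h, ‖F (x + h) - F x - A h‖ ≤ C * ‖h‖ ^ 2) : Tendsto A (𝓝 0) (𝓝 0) := by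
  have hincr : Tendsto (fun h => F (x + h) - F x) (𝓝 0) (𝓝 0) := by
    simpa using
      (hF.tendsto.comp ((continuous_const_add x).tendsto' 0 x (add_zero x))).sub_const (F x)
  simpa using hincr.sub ((isLittleO_sub_sub_of_norm_le_sq hA).trans_tendsto tendsto_id)

theorem hasFDerivAt_of_norm_sub_le_sq [NormedSpace ℝ X] [NormedSpace ℝ Y] {f' : X →L[ℝ] Y}
    (hf' : ∀ h, ‖F (x + h) - F x - f' h‖ ≤ C * ‖h‖ ^ 2) : HasFDerivAt F f' x :=
  hasFDerivAt_iff_isLittleO_nhds_zero.mpr (isLittleO_sub_sub_of_norm_le_sq hf')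

end QuadraticRemainder

section JensenBound

variable {X Y : Type*} [NormedAddCommGroup X] [NormedSpace ℝ X]
  [NormedAddCommGroup Y] [NormedSpace ℝ Y]

def QuadraticJensenBound (F : X → Y) (L : ℝ) : Prop :=
  ∀ (a b : X) (l : ℝ), 0 ≤ l → l ≤ 1 →
    ‖F (l • a + (1 - l) • b) - (l • F a + (1 - l) • F b)‖ ≤ L / 2 * (l * (1 - l) * ‖a - b‖ ^ 2)

noncomputable def dirQuotient (F : X → Y) (x h : X) (t : ℝ) : Y := t⁻¹ • (F (x + t • h) - F x)

noncomputable def rightDirDeriv (F : X → Y) (x h : X) : Y :=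
  limUnder (𝓝[>] 0) (dirQuotient F x h)

theorem QuadraticJensenBound.of_forall_fin {F : X → Y} {L : ℝ}
    (h : ∀ (n : ℕ) (x : Fin n → X) (lam : Fin n → ℝ), (∀ i, 0 ≤ lam i) → ∑ i, lam i = 1 →
      ‖F (∑ i, lam i • x i) - ∑ i, lam i • F (x i)‖ ≤
        L / 2 * ∑ i, ∑ j, if i < j then lam i * lam j * ‖x i - x j‖ ^ 2 else 0) :
    QuadraticJensenBound F L := by
  intro a b l hl₀ hl₁
  have h2 := h 2 ![a, b] ![l, 1 - l] (fun i => by fin_cases i <;> simp [hl₀, hl₁])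
    (by simp [Fin.sum_univ_two])
  simpa [Fin.sum_univ_two] using h2

namespace QuadraticJensenBound

variable {F : X → Y} {L : ℝ} {x h : X}

theorem norm_dirQuotient_sub_le (hJ : QuadraticJensenBound F L) {s t : ℝ} (hs : 0 < s)
    (hst : s ≤ t) :
    ‖dirQuotient F x h s - dirQuotient F x h t‖ ≤ L / 2 * ‖h‖ ^ 2 * (t - s) := by
  have ht : 0 < t := hs.trans_le hst
  have hl₁ : s / t ≤ 1 := (div_le_one ht).mpr hst
  have hJst := hJ (x + t • h) x (s / t) (by positivity) hl₁
  have hpoint : (s / t) • (x + t • h) + (1 - s / t) • x = x + s • h := by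
    rw [smul_add, smul_smul, div_mul_cancel₀ s ht.ne']
    module
  have hquot : dirQuotient F x h s - dirQuotient F x h t
      = s⁻¹ • (F (x + s • h) - ((s / t) • F (x + t • h) + (1 - s / t) • F x)) := by
    simp only [dirQuotient]
    match_scalars <;> field_simp; ring
  rw [hpoint, add_sub_cancel_left, norm_smul, Real.norm_of_nonneg ht.le] at hJst
  rw [hquot, norm_smul, Real.norm_of_nonneg (inv_nonneg.mpr hs.le)]
  calc s⁻¹ * ‖F (x + s • h) - ((s / t) • F (x + t • h) + (1 - s / t) • F x)‖
      ≤ s⁻¹ * (L / 2 * (s / t * (1 - s / t) * (t * ‖h‖) ^ 2)) := by gcongr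
    _ = L / 2 * ‖h‖ ^ 2 * (t - s) := by field_simp

theorem dist_dirQuotient_le (hJ : QuadraticJensenBound F L) {s t : ℝ} (hs : 0 < s)
    (ht : 0 < t) :
    dist (dirQuotient F x h s) (dirQuotient F x h t) ≤ L / 2 * ‖h‖ ^ 2 * dist s t := by
  wlog hst : s ≤ t generalizing s t
  · rw [dist_comm, dist_comm s]
    exact this ht hs (le_of_not_ge hst)
  rw [dist_eq_norm, Real.dist_eq, abs_sub_comm, abs_of_nonneg (sub_nonneg.mpr hst)]
  exact hJ.norm_dirQuotient_sub_le hs hst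

theorem exists_tendsto_dirQuotient [CompleteSpace Y] (hJ : QuadraticJensenBound F L) :
    ∃ A, Tendsto (dirQuotient F x h) (𝓝[>] 0) (𝓝 A) :=
  have hLip : LipschitzOnWith _ (dirQuotient F x h) (Set.Ioi 0) :=
    LipschitzOnWith.of_dist_le' fun _ hs _ ht => hJ.dist_dirQuotient_le hs ht
  cauchy_map_iff_exists_tendsto.mp <| (cauchy_nhds.mono nhdsWithin_le_nhds).map_of_le
    hLip.uniformContinuousOn (le_principal_iff.mpr self_mem_nhdsWithin)

theorem tendsto_dirQuotient [CompleteSpace Y] (hJ : QuadraticJensenBound F L) :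
    Tendsto (dirQuotient F x h) (𝓝[>] 0) (𝓝 (rightDirDeriv F x h)) :=
  tendsto_nhds_limUnder hJ.exists_tendsto_dirQuotient

theorem norm_dirQuotient_sub_rightDirDeriv_le [CompleteSpace Y] (hJ : QuadraticJensenBound F L)
    {t : ℝ} (ht : 0 < t) :
    ‖dirQuotient F x h t - rightDirDeriv F x h‖ ≤ L / 2 * ‖h‖ ^ 2 * t := by
  have hdist : Tendsto (fun s => dist (dirQuotient F x h t) (dirQuotient F x h s)) (𝓝[>] 0)
      (𝓝 (dist (dirQuotient F x h t) (rightDirDeriv F x h))) :=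
    tendsto_const_nhds.dist hJ.tendsto_dirQuotient
  have hbound : Tendsto (fun s => L / 2 * ‖h‖ ^ 2 * dist t s) (𝓝[>] 0)
      (𝓝 (L / 2 * ‖h‖ ^ 2 * dist t 0)) :=
    ((tendsto_const_nhds.dist tendsto_id).const_mul _).mono_left nhdsWithin_le_nhds
  have hle := le_of_tendsto_of_tendsto hdist hbound <|
    eventually_nhdsWithin_of_forall fun s hs => hJ.dist_dirQuotient_le ht hs
  rwa [dist_eq_norm, dist_zero_right, Real.norm_of_nonneg ht.le] at hle

theorem norm_sub_sub_rightDirDeriv_le [CompleteSpace Y] (hJ : QuadraticJensenBound F L) :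
    ‖F (x + h) - F x - rightDirDeriv F x h‖ ≤ L / 2 * ‖h‖ ^ 2 := by
  simpa [dirQuotient] using hJ.norm_dirQuotient_sub_rightDirDeriv_le (x := x) (h := h) one_pos

theorem norm_dirQuotient_add_sub_le (hJ : QuadraticJensenBound F L) {h₁ h₂ : X} {t : ℝ}
    (ht : 0 < t) :
    ‖dirQuotient F x (h₁ + h₂) t - (dirQuotient F x h₁ (2 * t) + dirQuotient F x h₂ (2 * t))‖ ≤
      L / 2 * ‖h₁ - h₂‖ ^ 2 * t := by
  have hJmid := hJ (x + (2 * t) • h₁) (x + (2 * t) • h₂) (1 / 2) (by norm_num) (by norm_num)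
  have hmid : (1 / 2 : ℝ) • (x + (2 * t) • h₁) + (1 - 1 / 2 : ℝ) • (x + (2 * t) • h₂)
      = x + t • (h₁ + h₂) := by module
  have hdiff : x + (2 * t) • h₁ - (x + (2 * t) • h₂) = (2 * t) • (h₁ - h₂) := by module
  have hquot : dirQuotient F x (h₁ + h₂) t -
        (dirQuotient F x h₁ (2 * t) + dirQuotient F x h₂ (2 * t)) =
      t⁻¹ • (F (x + t • (h₁ + h₂)) -
        ((1 / 2 : ℝ) • F (x + (2 * t) • h₁) + (1 - 1 / 2 : ℝ) • F (x + (2 * t) • h₂))) := by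
    simp only [dirQuotient]
    match_scalars <;> field_simp <;> ring
  rw [hmid, hdiff, norm_smul, Real.norm_of_nonneg (by positivity)] at hJmid
  rw [hquot, norm_smul, Real.norm_of_nonneg (inv_nonneg.mpr ht.le)]
  calc t⁻¹ * ‖F (x + t • (h₁ + h₂)) -
        ((1 / 2 : ℝ) • F (x + (2 * t) • h₁) + (1 - 1 / 2 : ℝ) • F (x + (2 * t) • h₂))‖
      ≤ t⁻¹ * (L / 2 * (1 / 2 * (1 - 1 / 2) * (2 * t * ‖h₁ - h₂‖) ^ 2)) := by gcongr
    _ = L / 2 * ‖h₁ - h₂‖ ^ 2 * t := by field_simp; ring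

theorem rightDirDeriv_add [CompleteSpace Y] (hJ : QuadraticJensenBound F L) (h₁ h₂ : X) :
    rightDirDeriv F x (h₁ + h₂) = rightDirDeriv F x h₁ + rightDirDeriv F x h₂ := by
  have hdouble : Tendsto (fun t : ℝ => 2 * t) (𝓝[>] 0) (𝓝[>] 0) :=
    tendsto_nhdsWithin_iff.mpr
      ⟨by simpa using (tendsto_id.const_mul (2 : ℝ)).mono_left (nhdsWithin_le_nhds (a := 0)),
        eventually_nhdsWithin_of_forall fun t ht => by simpa using ht⟩
  have hsum := ((hJ.tendsto_dirQuotient (x := x) (h := h₁)).comp hdouble).add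
    ((hJ.tendsto_dirQuotient (x := x) (h := h₂)).comp hdouble)
  have hdefect : Tendsto (fun t => dirQuotient F x (h₁ + h₂) t -
      (dirQuotient F x h₁ (2 * t) + dirQuotient F x h₂ (2 * t))) (𝓝[>] 0) (𝓝 0) := by
    refine squeeze_zero_norm' (eventually_nhdsWithin_of_forall fun t ht =>
      hJ.norm_dirQuotient_add_sub_le ht) ?_
    simpa using ((tendsto_id.const_mul (L / 2 * ‖h₁ - h₂‖ ^ 2)).mono_left
      (nhdsWithin_le_nhds (a := (0 : ℝ))))
  refine tendsto_nhds_unique hJ.tendsto_dirQuotient ?_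
  simpa using hdefect.add hsum

theorem exists_hasFDerivAt [CompleteSpace Y] (hJ : QuadraticJensenBound F L)
    (hF : ContinuousAt F x) :
    ∃ f' : X →L[ℝ] Y, HasFDerivAt F f' x ∧ ∀ h, f' h = rightDirDeriv F x h := by
  let A : X →+ Y := AddMonoidHom.mk' (rightDirDeriv F x) hJ.rightDirDeriv_add
  have hA : Continuous A := continuous_of_tendsto_nhds_zero A <|
    tendsto_zero_of_norm_sub_le_sq hF fun _ => hJ.norm_sub_sub_rightDirDeriv_le
  exact ⟨A.toRealLinearMap hA, hasFDerivAt_of_norm_sub_le_sq fun _ =>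
    hJ.norm_sub_sub_rightDirDeriv_le, fun _ => rfl⟩

end QuadraticJensenBound

end JensenBound

theorem differentiable_and_quadratic_bound_of_jensen_inequality_general
    {X : Type*} [NormedAddCommGroup X] [InnerProductSpace ℝ X]
    {Y : Type*} [NormedAddCommGroup Y] [NormedSpace ℝ Y] [CompleteSpace Y]
    (F : X → Y) (hF : Continuous F) (L : ℝ)
    (hineq : ∀ (n : ℕ) (x : Fin n → X) (lam : Fin n → ℝ), (∀ i, 0 ≤ lam i) → ∑ i, lam i = 1 →
      ‖F (∑ i, lam i • x i) - ∑ i, lam i • F (x i)‖ ≤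
        L / 2 * ∑ i, ∑ j, if i < j then lam i * lam j * ‖x i - x j‖ ^ 2 else 0) :
    Differentiable ℝ F ∧
      ∀ x h : X, ‖F (x + h) - F x - fderiv ℝ F x h‖ ≤ L / 2 * ‖h‖ ^ 2 := by
  have hJ := QuadraticJensenBound.of_forall_fin hineq
  choose f' hf' hf'_apply using fun x => hJ.exists_hasFDerivAt (x := x) hF.continuousAt
  refine ⟨fun x => (hf' x).differentiableAt, fun x h => ?_⟩
  rw [(hf' x).fderiv, hf'_apply]
  exact hJ.norm_sub_sub_rightDirDeriv_le

/-- If `F : X → Y` (with `X` a real Hilbert space and `Y` a reflexive real Banach space) is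
continuous and satisfies the Jensen-type inequality for all convex combinations, then `F` is
Fréchet differentiable and satisfies `‖F (x + h) - F x - F' x h‖ ≤ L/2 * ‖h‖²`. -/
theorem differentiable_and_quadratic_bound_of_jensen_inequality
    {X : Type*} [NormedAddCommGroup X] [InnerProductSpace ℝ X] [CompleteSpace X]
    {Y : Type*} [NormedAddCommGroup Y] [NormedSpace ℝ Y] [CompleteSpace Y]
    (hrefl : Function.Surjective (NormedSpace.inclusionInDoubleDual ℝ Y))
    (F : X → Y) (hF : Continuous F) (L : ℝ) (hL : 0 < L)
    (hineq : ∀ (n : ℕ) (x : Fin n → X) (lam : Fin n → ℝ), (∀ i, 0 ≤ lam i) → ∑ i, lam i = 1 →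
      ‖F (∑ i, lam i • x i) - ∑ i, lam i • F (x i)‖ ≤
        L / 2 * ∑ i, ∑ j, if i < j then lam i * lam j * ‖x i - x j‖ ^ 2 else 0) :
    Differentiable ℝ F ∧
      ∀ x h : X, ‖F (x + h) - F x - fderiv ℝ F x h‖ ≤ L / 2 * ‖h‖ ^ 2 :=
  differentiable_and_quadratic_bound_of_jensen_inequality_general F hF L hineq
end
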